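/- arXiv:2507.06844 — 2 statements merged into one kernel-verified Lean document; each statement's English description precedes it below -/
import Mathlib

section
/- Let σ_1,…,σ_N > 0, let r_1,…,r_N ∈ [0,1], and define weights α_k = (σ_ψ²/σ_k²)·φ(r_k) where σ_ψ² = (∑_j σ_j^{-2} ψ(r_j))^{-1} and ψ(x)=xφ(x), with φ as above and ∑_j ψ(r_j) > 0. Then: (i) ∑_k α_k r_k ‖g‖² = ‖g‖² for any vector g (i.e., ∑_k α_k(‖g‖² - d_k²) = ‖g‖² when r_k = (‖g‖² - d_k²)/‖g‖² for distances d_k ≤ ‖g‖); (ii) ∑_k α_k² σ_k² = σ_ψ⁴/σ_{φ²}² ≤ σ_ψ², where σ_{φ²}² = (∑_j σ_j^{-2} φ(r_j)²)^{-1}. -/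
/-- Key algebraic identities behind the collaboration-weight design. -/
theorem collaboration_weights_identities {d N : ℕ} (σ r : Fin N → ℝ)
    (hσ : ∀ k, 0 < σ k) (hr : ∀ k, r k ∈ Set.Icc (0 : ℝ) 1)
    (φ : ℝ → ℝ) (hφmono : MonotoneOn φ (Set.Icc 0 1)) (hφ0 : φ 0 = 0)
    (hφle : ∀ x ∈ Set.Icc (0 : ℝ) 1, φ x ≤ x)
    (hφmem : ∀ x ∈ Set.Icc (0 : ℝ) 1, φ x ∈ Set.Icc (0 : ℝ) 1)
    (ψ : ℝ → ℝ) (hψ : ∀ x, ψ x = x * φ x)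
    (σψ2 : ℝ) (hσψ2 : σψ2 = (∑ j, (σ j ^ 2)⁻¹ * ψ (r j))⁻¹)
    (hpos : 0 < ∑ j, (σ j ^ 2)⁻¹ * ψ (r j))
    (α : Fin N → ℝ) (hα : ∀ k, α k = σψ2 / σ k ^ 2 * φ (r k)) :
    (∀ g : EuclideanSpace ℝ (Fin d), ∑ k, α k * (r k * ‖g‖ ^ 2) = ‖g‖ ^ 2) ∧
      (∑ k, (α k) ^ 2 * σ k ^ 2 = σψ2 ^ 2 * ∑ j, (σ j ^ 2)⁻¹ * φ (r j) ^ 2) ∧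
      (∑ k, (α k) ^ 2 * σ k ^ 2 ≤ σψ2) := by
  have hS : (∑ j, (σ j ^ 2)⁻¹ * ψ (r j)) ≠ 0 := ne_of_gt hpos
  have hsum : ∑ k, α k * r k = 1 := by
    have : ∑ k, α k * r k = σψ2 * ∑ j, (σ j ^ 2)⁻¹ * ψ (r j) := by
      rw [Finset.mul_sum]
      refine Finset.sum_congr rfl fun k _ => ?_
      rw [hα k, hψ]; field_simp
    rw [this, hσψ2, inv_mul_cancel₀ hS]
  have heq : ∑ k, (α k) ^ 2 * σ k ^ 2 = σψ2 ^ 2 * ∑ j, (σ j ^ 2)⁻¹ * φ (r j) ^ 2 := by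
    rw [Finset.mul_sum]
    refine Finset.sum_congr rfl fun k _ => ?_
    have hk := (hσ k).ne'
    rw [hα k]; field_simp
  refine ⟨fun g => ?_, heq, ?_⟩
  · calc ∑ k, α k * (r k * ‖g‖ ^ 2) = (∑ k, α k * r k) * ‖g‖ ^ 2 := by
          rw [Finset.sum_mul]; exact Finset.sum_congr rfl fun k _ => by ring
      _ = ‖g‖ ^ 2 := by rw [hsum, one_mul]
  · rw [heq]
    have hσψpos : 0 < σψ2 := by rw [hσψ2]; positivity
    have hle : ∑ j, (σ j ^ 2)⁻¹ * φ (r j) ^ 2 ≤ ∑ j, (σ j ^ 2)⁻¹ * ψ (r j) := by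
      refine Finset.sum_le_sum fun j _ => ?_
      have hmem := hφmem (r j) (hr j)
      have h1 : φ (r j) ^ 2 ≤ ψ (r j) := by
        rw [hψ, sq]
        exact mul_le_mul (hφle _ (hr j)) le_rfl hmem.1 (hr j).1
      exact mul_le_mul_of_nonneg_left h1 (by positivity)
    calc σψ2 ^ 2 * ∑ j, (σ j ^ 2)⁻¹ * φ (r j) ^ 2
        ≤ σψ2 ^ 2 * ∑ j, (σ j ^ 2)⁻¹ * ψ (r j) := by
          exact mul_le_mul_of_nonneg_left hle (by positivity)
      _ = σψ2 := by rw [hσψ2, sq, mul_assoc, inv_mul_cancel₀ hS, mul_one]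
end

section
/- Let e_0 > 0, σ² > 0, β, μ > 0, T ≥ 1, and suppose e_T ≤ (1-ημ)^T e_0 + (ηβ/(2μ))σ² for all admissible η ∈ (0, 1/μ]. If η = (1/(μT))·ln(2Tμ²e_0/(βσ²)) satisfies η ≤ 1/μ and the logarithm is positive, then e_T ≤ (βσ²/(2μ²T))·(ln(2Tμ²e_0/(βσ²)) + 1). -/
/-- Horizon-dependent step size optimization of the constant-step bound (Theorem 2). -/
theorem horizon_dependent_step_bound (e0 eT σ2 β μ : ℝ) (T : ℕ) (hT : 1 ≤ T)
    (he0 : 0 < e0) (hσ : 0 < σ2) (hβ : 0 < β) (hμ : 0 < μ)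
    (hbound : ∀ η : ℝ, 0 < η → η ≤ 1 / μ →
      eT ≤ (1 - η * μ) ^ T * e0 + η * β / (2 * μ) * σ2)
    (η : ℝ) (hη : η = 1 / (μ * T) * Real.log (2 * T * μ ^ 2 * e0 / (β * σ2)))
    (hη1 : η ≤ 1 / μ) (hlog : 0 < Real.log (2 * T * μ ^ 2 * e0 / (β * σ2))) :
    eT ≤ β * σ2 / (2 * μ ^ 2 * T) * (Real.log (2 * T * μ ^ 2 * e0 / (β * σ2)) + 1) := by
  set L := Real.log (2 * T * μ ^ 2 * e0 / (β * σ2)) with hL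
  have hTpos : (0:ℝ) < T := by exact_mod_cast hT
  have hx : (0:ℝ) < 2 * T * μ ^ 2 * e0 / (β * σ2) := by positivity
  have hηpos : 0 < η := by
    rw [hη]; positivity
  have hb := hbound η hηpos hη1
  have hημ1 : η * μ ≤ 1 := by
    rwa [le_div_iff₀ hμ] at hη1
  have h1 : (1 - η * μ) ^ T ≤ Real.exp (-(η * μ)) ^ T := by
    apply pow_le_pow_left₀ (by linarith) (by linarith [Real.add_one_le_exp (-(η * μ))])
  have h2 : Real.exp (-(η * μ)) ^ T = Real.exp (-(η * μ * T)) := by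
    rw [← Real.exp_nat_mul]; ring_nf
  have hημT : η * μ * T = L := by
    rw [hη]; field_simp
  have h3 : Real.exp (-L) = (2 * T * μ ^ 2 * e0 / (β * σ2))⁻¹ := by
    rw [hL, ← Real.log_inv, Real.exp_log (by positivity)]
  have h4 : (1 - η * μ) ^ T * e0 ≤ β * σ2 / (2 * μ ^ 2 * T) := by
    calc (1 - η * μ) ^ T * e0 ≤ Real.exp (-(η * μ * T)) * e0 := by
          rw [← h2]; exact mul_le_mul_of_nonneg_right h1 he0.le
      _ = β * σ2 / (2 * μ ^ 2 * T) := by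
          rw [hημT, h3]; field_simp
  have h5 : η * β / (2 * μ) * σ2 = β * σ2 / (2 * μ ^ 2 * T) * L := by
    rw [hη]; field_simp
  calc eT ≤ (1 - η * μ) ^ T * e0 + η * β / (2 * μ) * σ2 := hb
    _ ≤ β * σ2 / (2 * μ ^ 2 * T) + β * σ2 / (2 * μ ^ 2 * T) * L := by
        rw [h5]; linarith
    _ = β * σ2 / (2 * μ ^ 2 * T) * (L + 1) := by ring
end
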